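/- arXiv:0805.1441 — 7 statements merged into one kernel-verified Lean document; each statement's English description precedes it below -/
import Mathlib

section
/- Let m : A → Z → Prop be an injective relation. Then m is total if and only if m is left-cancellable under composition: for every type W and all injective relations f, g : W → A → Prop, (f ; m) = (g ; m) implies f = g. -/
/-- A relation `R : A → Z → Prop` is injective if `R a z` and `R a' z` imply `a = a'`. -/
def IsInjRel {A Z : Type*} (R : A → Z → Prop) : Prop :=
  ∀ ⦃a a' : A⦄ ⦃z : Z⦄, R a z → R a' z → a = a'

/-- Image of a set under a relation. -/
def RelImage {A Z : Type*} (R : A → Z → Prop) (α : Set A) : Set Z :=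
  {z | ∃ a ∈ α, R a z}

/-- Composite of relations: `(R ; S) a c ↔ ∃ b, R a b ∧ S b c`. -/
def RelComp {A B C : Type*} (R : A → B → Prop) (S : B → C → Prop) : A → C → Prop :=
  fun a c => ∃ b, R a b ∧ S b c

/-- An injective relation `m` is total iff it is left-cancellable under composition
(i.e. monic in the category of injective relations). -/
theorem injRel_total_iff_monic {A Z : Type*} (m : A → Z → Prop) (hm : IsInjRel m) :
    (∀ a : A, ∃ z : Z, m a z) ↔
      ∀ (W : Type*) (f g : W → A → Prop), IsInjRel f → IsInjRel g →
        RelComp f m = RelComp g m → f = g := by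
  constructor
  · intro htot W f g hf hg hcomp
    funext w a
    apply propext
    constructor
    · intro hfa
      obtain ⟨z, hz⟩ := htot a
      have h1 : RelComp f m w z := ⟨a, hfa, hz⟩
      rw [hcomp] at h1
      obtain ⟨a', hga', hma'⟩ := h1
      rwa [← hm hz hma'] at hga'
    · intro hga
      obtain ⟨z, hz⟩ := htot a
      have h1 : RelComp g m w z := ⟨a, hga, hz⟩
      rw [← hcomp] at h1
      obtain ⟨a', hfa', hma'⟩ := h1
      rwa [← hm hz hma'] at hfa'
  · intro hcancel a₀
    by_contra hne
    push_neg at hne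
    have h := hcancel PUnit (fun _ a => a = a₀) (fun _ _ => False)
      (fun w w' z _ _ => rfl) (fun w w' z h _ => h.elim) ?_
    · have := congrFun (congrFun h PUnit.unit) a₀
      simp at this
    · funext u z
      apply propext
      constructor
      · rintro ⟨a, rfl, hma⟩
        exact (hne z hma).elim
      · rintro ⟨a, h, _⟩
        exact h.elim
end

section
/- Let S be a nonempty set of synchronisations (for fixed injective relations g : A → Y → Prop and h : B → Y → Prop). Then the intersection ⋂₀ S ⊆ A ⊕ B is a synchronisation. -/
/-- `σ ⊆ A ⊕ B` is a synchronisation when `g(σ_A) = h(σ_B)`. -/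
def IsSync {A B Y : Type*} (g : A → Y → Prop) (h : B → Y → Prop)
    (σ : Set (A ⊕ B)) : Prop :=
  RelImage g {a | Sum.inl a ∈ σ} = RelImage h {b | Sum.inr b ∈ σ}

/-- A path is a minimal non-empty synchronisation. -/
def IsPath {A B Y : Type*} (g : A → Y → Prop) (h : B → Y → Prop)
    (γ : Set (A ⊕ B)) : Prop :=
  IsSync g h γ ∧ γ.Nonempty ∧
    ∀ τ ⊆ γ, IsSync g h τ → τ.Nonempty → τ = γ

/-- A nonempty intersection of synchronisations is a synchronisation. -/
theorem isSync_sInter {A B Y : Type*} (g : A → Y → Prop) (h : B → Y → Prop)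
    (hg : IsInjRel g) (hh : IsInjRel h)
    (S : Set (Set (A ⊕ B))) (hS : S.Nonempty) (hsync : ∀ σ ∈ S, IsSync g h σ) :
    IsSync g h (⋂₀ S) := by
  obtain ⟨σ₀, hσ₀⟩ := hS
  ext z
  constructor
  · rintro ⟨a, ha, haz⟩
    simp only [Set.mem_sInter, Set.mem_setOf_eq] at ha
    have hz0 : z ∈ RelImage h {b | Sum.inr b ∈ σ₀} := by
      rw [← hsync σ₀ hσ₀]; exact ⟨a, ha σ₀ hσ₀, haz⟩
    obtain ⟨b, hb, hbz⟩ := hz0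
    refine ⟨b, ?_, hbz⟩
    intro σ hσ
    have : z ∈ RelImage h {b | Sum.inr b ∈ σ} := by
      rw [← hsync σ hσ]; exact ⟨a, ha σ hσ, haz⟩
    obtain ⟨b', hb', hb'z⟩ := this
    rwa [hh hbz hb'z]
  · rintro ⟨b, hb, hbz⟩
    simp only [Set.mem_sInter, Set.mem_setOf_eq] at hb
    have hz0 : z ∈ RelImage g {a | Sum.inl a ∈ σ₀} := by
      rw [hsync σ₀ hσ₀]; exact ⟨b, hb σ₀ hσ₀, hbz⟩
    obtain ⟨a, ha, haz⟩ := hz0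
    refine ⟨a, ?_, haz⟩
    intro σ hσ
    have : z ∈ RelImage g {a | Sum.inl a ∈ σ} := by
      rw [hsync σ hσ]; exact ⟨b, hb σ hσ, hbz⟩
    obtain ⟨a', ha', ha'z⟩ := this
    rwa [hg haz ha'z]
end

section
/- If σ and τ are synchronisations (for fixed injective relations g : A → Y → Prop and h : B → Y → Prop), then the set difference σ \ τ ⊆ A ⊕ B is a synchronisation. -/
/-- The difference of two synchronisations is a synchronisation. -/
theorem isSync_diff {A B Y : Type*} (g : A → Y → Prop) (h : B → Y → Prop)
    (hg : IsInjRel g) (hh : IsInjRel h)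
    (σ τ : Set (A ⊕ B)) (hσ : IsSync g h σ) (hτ : IsSync g h τ) :
    IsSync g h (σ \ τ) := by
  ext y
  constructor
  · rintro ⟨a, ⟨haσ, haτ⟩, hay⟩
    have hy : y ∈ RelImage h {b | Sum.inr b ∈ σ} := hσ ▸ ⟨a, haσ, hay⟩
    obtain ⟨b, hbσ, hby⟩ := hy
    refine ⟨b, ⟨hbσ, fun hbτ => ?_⟩, hby⟩
    have hy2 : y ∈ RelImage g {a | Sum.inl a ∈ τ} := hτ ▸ ⟨b, hbτ, hby⟩
    obtain ⟨a', ha'τ, ha'y⟩ := hy2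
    exact haτ (hg hay ha'y ▸ ha'τ)
  · rintro ⟨b, ⟨hbσ, hbτ⟩, hby⟩
    have hy : y ∈ RelImage g {a | Sum.inl a ∈ σ} := hσ.symm ▸ ⟨b, hbσ, hby⟩
    obtain ⟨a, haσ, hay⟩ := hy
    refine ⟨a, ⟨haσ, fun haτ => ?_⟩, hay⟩
    have hy2 : y ∈ RelImage h {b | Sum.inr b ∈ τ} := hτ.symm ▸ ⟨a, haτ, hay⟩
    obtain ⟨b', hb'τ, hb'y⟩ := hy2
    exact hbτ (hh hby hb'y ▸ hb'τ)
end

section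
/- Distinct paths are disjoint: if γ and γ' are paths (for fixed injective relations g : A → Y → Prop and h : B → Y → Prop) and γ ≠ γ', then γ ∩ γ' = ∅. -/
lemma inter_sync {A B Y : Type*} (g : A → Y → Prop) (h : B → Y → Prop)
    (hg : IsInjRel g) (hh : IsInjRel h)
    (γ γ' : Set (A ⊕ B)) (h1 : IsSync g h γ) (h2 : IsSync g h γ') :
    IsSync g h (γ ∩ γ') := by
  ext y
  constructor
  · rintro ⟨a, ⟨ha1, ha2⟩, hay⟩
    have hy1 : y ∈ RelImage h {b | Sum.inr b ∈ γ} := by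
      rw [← h1]; exact ⟨a, ha1, hay⟩
    have hy2 : y ∈ RelImage h {b | Sum.inr b ∈ γ'} := by
      rw [← h2]; exact ⟨a, ha2, hay⟩
    obtain ⟨b, hb, hby⟩ := hy1
    obtain ⟨b', hb', hby'⟩ := hy2
    exact ⟨b, ⟨hb, (hh hby hby') ▸ hb'⟩, hby⟩
  · rintro ⟨b, ⟨hb1, hb2⟩, hby⟩
    have hy1 : y ∈ RelImage g {a | Sum.inl a ∈ γ} := by
      rw [h1]; exact ⟨b, hb1, hby⟩
    have hy2 : y ∈ RelImage g {a | Sum.inl a ∈ γ'} := by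
      rw [h2]; exact ⟨b, hb2, hby⟩
    obtain ⟨a, ha, hay⟩ := hy1
    obtain ⟨a', ha', hay'⟩ := hy2
    exact ⟨a, ⟨ha, (hg hay hay') ▸ ha'⟩, hay⟩

/-- Distinct paths are disjoint. -/
theorem paths_disjoint {A B Y : Type*} (g : A → Y → Prop) (h : B → Y → Prop)
    (hg : IsInjRel g) (hh : IsInjRel h)
    (γ γ' : Set (A ⊕ B)) (hγ : IsPath g h γ) (hγ' : IsPath g h γ')
    (hne : γ ≠ γ') : γ ∩ γ' = ∅ := by
  by_contra hemp
  have hnonempty : (γ ∩ γ').Nonempty := Set.nonempty_iff_ne_empty.mpr hemp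
  have hsync := inter_sync g h hg hh γ γ' hγ.1 hγ'.1
  have e1 := hγ.2.2 (γ ∩ γ') Set.inter_subset_left hsync hnonempty
  have e2 := hγ'.2.2 (γ ∩ γ') Set.inter_subset_right hsync hnonempty
  exact hne (e1 ▸ e2)
end

section
/- Decomposition: every synchronisation σ (for fixed injective relations g : A → Y → Prop and h : B → Y → Prop) is the union of the paths contained in it: σ = ⋃ {γ | γ is a path and γ ⊆ σ}. -/
/-! Call two points of `A ⊕ B` linked when one lies in `A`, the other in `B`, and their images
under `g` and `h` meet. For injective `g` and `h` a synchronisation is closed under links, while a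
subset of a synchronisation `σ` closed under links inside `σ` is again a synchronisation. So the
linkage class of `x ∈ σ` inside `σ` is a synchronisation, and any non-empty synchronisation
contained in it is all of it: it is a path through `x` inside `σ`. -/

section

variable {A B Y : Type*} {g : A → Y → Prop} {h : B → Y → Prop}

def Linked (g : A → Y → Prop) (h : B → Y → Prop) : A ⊕ B → A ⊕ B → Prop
  | .inl a, .inr b => ∃ y, g a y ∧ h b y
  | .inr b, .inl a => ∃ y, g a y ∧ h b y
  | _, _ => False

theorem Linked.symm {u v : A ⊕ B} (huv : Linked g h u v) : Linked g h v u := by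
  rcases u with a | b <;> rcases v with a' | b' <;> exact huv

def LinkedWithin (g : A → Y → Prop) (h : B → Y → Prop) (σ : Set (A ⊕ B)) (u v : A ⊕ B) :
    Prop :=
  u ∈ σ ∧ v ∈ σ ∧ Linked g h u v

instance (σ : Set (A ⊕ B)) : Std.Symm (LinkedWithin g h σ) :=
  ⟨fun _ _ ⟨hu, hv, huv⟩ => ⟨hv, hu, huv.symm⟩⟩

def linkageClass (g : A → Y → Prop) (h : B → Y → Prop) (σ : Set (A ⊕ B)) (x : A ⊕ B) :
    Set (A ⊕ B) :=
  {v | Relation.ReflTransGen (LinkedWithin g h σ) x v}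

namespace IsSync

variable {σ τ : Set (A ⊕ B)}

theorem exists_inr_of_inl (hτ : IsSync g h τ) {a : A} {y : Y} (ha : .inl a ∈ τ) (hay : g a y) :
    ∃ b, .inr b ∈ τ ∧ h b y :=
  show y ∈ RelImage h _ from hτ ▸ ⟨a, ha, hay⟩

theorem exists_inl_of_inr (hτ : IsSync g h τ) {b : B} {y : Y} (hb : .inr b ∈ τ) (hby : h b y) :
    ∃ a, .inl a ∈ τ ∧ g a y :=
  show y ∈ RelImage g _ from hτ.symm ▸ ⟨b, hb, hby⟩

theorem mem_of_linked (hg : IsInjRel g) (hh : IsInjRel h) (hτ : IsSync g h τ) {u v : A ⊕ B}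
    (hu : u ∈ τ) (huv : Linked g h u v) : v ∈ τ := by
  rcases u with a | b <;> rcases v with a' | b' <;> try exact huv.elim
  · obtain ⟨y, hay, hb'y⟩ := huv
    obtain ⟨b, hb, hby⟩ := hτ.exists_inr_of_inl hu hay
    rwa [hh hb'y hby]
  · obtain ⟨y, ha'y, hby⟩ := huv
    obtain ⟨a, ha, hay⟩ := hτ.exists_inl_of_inr hu hby
    rwa [hg ha'y hay]

theorem mem_of_reflTransGen (hg : IsInjRel g) (hh : IsInjRel h) (hτ : IsSync g h τ)
    {u v : A ⊕ B} (hu : u ∈ τ)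
    (huv : Relation.ReflTransGen (LinkedWithin g h σ) u v) : v ∈ τ := by
  induction huv with
  | refl => exact hu
  | tail _ hstep hw => exact hτ.mem_of_linked hg hh hw hstep.2.2

theorem of_subset_of_closed (hσ : IsSync g h σ) {γ : Set (A ⊕ B)} (hγσ : γ ⊆ σ)
    (hclosed : ∀ u ∈ γ, ∀ v ∈ σ, Linked g h u v → v ∈ γ) : IsSync g h γ := by
  ext y
  constructor
  · rintro ⟨a, ha, hay⟩
    obtain ⟨b, hb, hby⟩ := hσ.exists_inr_of_inl (hγσ ha) hay
    exact ⟨b, hclosed _ ha _ hb ⟨y, hay, hby⟩, hby⟩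
  · rintro ⟨b, hb, hby⟩
    obtain ⟨a, ha, hay⟩ := hσ.exists_inl_of_inr (hγσ hb) hby
    exact ⟨a, hclosed _ hb _ ha ⟨y, hay, hby⟩, hay⟩

end IsSync

section linkageClass

variable {σ : Set (A ⊕ B)} {x : A ⊕ B}

theorem mem_linkageClass_self : x ∈ linkageClass g h σ x :=
  Relation.ReflTransGen.refl

theorem linkageClass_subset (hx : x ∈ σ) : linkageClass g h σ x ⊆ σ := by
  intro v hv
  induction hv with
  | refl => exact hx
  | tail _ hstep => exact hstep.2.1

theorem isSync_linkageClass (hσ : IsSync g h σ) (hx : x ∈ σ) :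
    IsSync g h (linkageClass g h σ x) :=
  hσ.of_subset_of_closed (linkageClass_subset hx) fun _ hu _ hv huv =>
    Relation.ReflTransGen.tail hu ⟨linkageClass_subset hx hu, hv, huv⟩

theorem isPath_linkageClass (hg : IsInjRel g) (hh : IsInjRel h) (hσ : IsSync g h σ)
    (hx : x ∈ σ) : IsPath g h (linkageClass g h σ x) := by
  refine ⟨isSync_linkageClass hσ hx, ⟨x, mem_linkageClass_self⟩, ?_⟩
  rintro τ hτx hτ ⟨u, hu⟩
  refine hτx.antisymm fun v hv => hτ.mem_of_reflTransGen (σ := σ) hg hh hu ?_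
  exact (Std.Symm.symm _ _ (hτx hu)).trans hv

end linkageClass

end

/-- Decomposition: every synchronisation is the union of the paths contained in it. -/
theorem sync_eq_sUnion_paths {A B Y : Type*} (g : A → Y → Prop) (h : B → Y → Prop)
    (hg : IsInjRel g) (hh : IsInjRel h)
    (σ : Set (A ⊕ B)) (hσ : IsSync g h σ) :
    σ = ⋃₀ {γ | IsPath g h γ ∧ γ ⊆ σ} := by
  refine Set.Subset.antisymm (fun x hx => ?_) (Set.sUnion_subset fun γ hγ => hγ.2)
  exact ⟨linkageClass g h σ x,
    ⟨isPath_linkageClass hg hh hσ hx, linkageClass_subset hx⟩, mem_linkageClass_self⟩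
end

section
/- The projection relations p : P → A → Prop and q : P → B → Prop (p γ a ↔ Sum.inl a ∈ γ and q γ b ↔ Sum.inr b ∈ γ, where P is the type of paths) are injective relations: if Sum.inl a ∈ γ and Sum.inl a ∈ γ' for paths γ, γ' then γ = γ', and likewise for Sum.inr b. -/
lemma sync_inter {A B Y : Type*} {g : A → Y → Prop} {h : B → Y → Prop}
    (hg : IsInjRel g) (hh : IsInjRel h) {σ τ : Set (A ⊕ B)}
    (hσ : IsSync g h σ) (hτ : IsSync g h τ) : IsSync g h (σ ∩ τ) := by
  ext y
  constructor
  · rintro ⟨a, ⟨haσ, haτ⟩, hay⟩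
    have h1 : y ∈ RelImage g {a | Sum.inl a ∈ σ} := ⟨a, haσ, hay⟩
    have h2 : y ∈ RelImage g {a | Sum.inl a ∈ τ} := ⟨a, haτ, hay⟩
    obtain ⟨b, hbσ, hby⟩ := hσ ▸ h1
    obtain ⟨b', hbτ, hb'y⟩ := hτ ▸ h2
    exact ⟨b, ⟨hbσ, hh hby hb'y ▸ hbτ⟩, hby⟩
  · rintro ⟨b, ⟨hbσ, hbτ⟩, hby⟩
    have h1 : y ∈ RelImage h {b | Sum.inr b ∈ σ} := ⟨b, hbσ, hby⟩
    have h2 : y ∈ RelImage h {b | Sum.inr b ∈ τ} := ⟨b, hbτ, hby⟩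
    obtain ⟨a, haσ, hay⟩ := hσ.symm ▸ h1
    obtain ⟨a', haτ, ha'y⟩ := hτ.symm ▸ h2
    exact ⟨a, ⟨haσ, hg hay ha'y ▸ haτ⟩, hay⟩

lemma path_eq_of_mem {A B Y : Type*} {g : A → Y → Prop} {h : B → Y → Prop}
    (hg : IsInjRel g) (hh : IsInjRel h) {γ γ' : Set (A ⊕ B)}
    (hγ : IsPath g h γ) (hγ' : IsPath g h γ') {x : A ⊕ B}
    (hx : x ∈ γ) (hx' : x ∈ γ') : γ = γ' := by
  have hs := sync_inter hg hh hγ.1 hγ'.1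
  have hne : (γ ∩ γ').Nonempty := ⟨x, hx, hx'⟩
  have h1 := hγ.2.2 _ Set.inter_subset_left hs hne
  have h2 := hγ'.2.2 _ Set.inter_subset_right hs hne
  exact h1.symm.trans h2

/-- The projection relations `p` and `q` from paths are injective relations. -/
theorem projections_injective {A B Y : Type*} (g : A → Y → Prop) (h : B → Y → Prop)
    (hg : IsInjRel g) (hh : IsInjRel h) :
    IsInjRel (fun (γ : {γ : Set (A ⊕ B) // IsPath g h γ}) (a : A) => Sum.inl a ∈ γ.val) ∧
      IsInjRel (fun (γ : {γ : Set (A ⊕ B) // IsPath g h γ}) (b : B) => Sum.inr b ∈ γ.val) := by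
  refine ⟨fun γ γ' a hmem hmem' => Subtype.ext ?_, fun γ γ' b hmem hmem' => Subtype.ext ?_⟩
  · exact path_eq_of_mem hg hh γ.2 γ'.2 hmem hmem'
  · exact path_eq_of_mem hg hh γ.2 γ'.2 hmem hmem'
end

section
/- Let P' be a type and p' : P' → A → Prop, q' : P' → B → Prop injective relations with (p' ; g) = (q' ; h), and for d : P' let σ(d) = {Sum.inl a | p' d a} ∪ {Sum.inr b | q' d b}. Then the relation u : P' → P → Prop defined by u d γ ↔ γ ⊆ σ(d) is injective: if a path γ satisfies γ ⊆ σ(d) and γ ⊆ σ(e), then d = e. -/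
/-- The mediating relation `u d γ ↔ γ ⊆ σ(d)` is injective. -/
theorem mediating_injective {A B Y : Type*} (g : A → Y → Prop) (h : B → Y → Prop)
    (hg : IsInjRel g) (hh : IsInjRel h)
    {P' : Type*} (p' : P' → A → Prop) (q' : P' → B → Prop)
    (hp' : IsInjRel p') (hq' : IsInjRel q')
    (hcomm : RelComp p' g = RelComp q' h) :
    IsInjRel (fun (d : P') (γ : {γ : Set (A ⊕ B) // IsPath g h γ}) =>
      γ.val ⊆ (Sum.inl '' {a | p' d a}) ∪ (Sum.inr '' {b | q' d b})) := by
  intro d e γ hd he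
  obtain ⟨x, hx⟩ := γ.2.2.1
  rcases hd hx with ⟨a, ha, rfl⟩ | ⟨b, hb, rfl⟩
  · rcases he hx with ⟨a', ha', h'⟩ | ⟨b', _, h'⟩
    · cases h'; exact hp' ha ha'
    · cases h'
  · rcases he hx with ⟨a', _, h'⟩ | ⟨b', hb', h'⟩
    · cases h'
    · cases h'; exact hq' hb hb'
end
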